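/- The function f : [0,1] → ℝ defined by f(τ) = τ⁸ satisfies the second-order ODE f''(τ) = −4 f(τ) − 4^{7/12} f'(τ) + 56 f(τ)^{3/4} + 8·4^{7/12} f(τ)^{7/8} + 4 f(τ) for all τ ∈ [0,1], and the zero function also satisfies the same ODE with the same initial conditions f(0) = f'(0) = 0. Hence this ODE with ¾-Hölder continuous right-hand side admits two distinct solutions. -/
import Mathlib

lemma deriv_pow8 : deriv (fun τ : ℝ => τ ^ (8 : ℕ)) = fun τ => 8 * τ ^ 7 := by
  ext τ; simp [deriv_pow]

lemma rpow_pow8 (τ : ℝ) (hτ : 0 ≤ τ) (p q : ℕ) (r : ℝ) (h : (8 : ℝ) * r = q) :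
    (τ ^ (8 : ℕ)) ^ r = τ ^ q := by
  have h' : ((8:ℕ):ℝ) * r = (q:ℝ) := by push_cast; exact h
  rw [← Real.rpow_natCast τ 8, ← Real.rpow_mul hτ, h', Real.rpow_natCast]

/-- both `f(τ) = τ⁸` and the zero function solve the ODE
`f'' = −4f − 4^{7/12} f' + 56 f^{3/4} + 8·4^{7/12} f^{7/8} + 4f` on `[0,1]`
with initial conditions `f(0) = f'(0) = 0`; hence this ODE with ¾-Hölder
continuous right-hand side admits two distinct solutions. -/
theorem stmt_15 (f g : ℝ → ℝ) (hf : f = fun τ => τ ^ (8 : ℕ))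
    (hg : g = fun _ => 0) :
    (∀ τ ∈ Set.Icc (0 : ℝ) 1,
      deriv (deriv f) τ =
        -4 * f τ - (4 : ℝ) ^ ((7 : ℝ) / 12) * deriv f τ
          + 56 * (f τ) ^ ((3 : ℝ) / 4)
          + 8 * (4 : ℝ) ^ ((7 : ℝ) / 12) * (f τ) ^ ((7 : ℝ) / 8)
          + 4 * f τ) ∧
    (∀ τ ∈ Set.Icc (0 : ℝ) 1,
      deriv (deriv g) τ =
        -4 * g τ - (4 : ℝ) ^ ((7 : ℝ) / 12) * deriv g τ
          + 56 * (g τ) ^ ((3 : ℝ) / 4)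
          + 8 * (4 : ℝ) ^ ((7 : ℝ) / 12) * (g τ) ^ ((7 : ℝ) / 8)
          + 4 * g τ) ∧
    f 0 = 0 ∧ deriv f 0 = 0 ∧ g 0 = 0 ∧ deriv g 0 = 0 ∧ f ≠ g := by
  subst hf hg
  refine ⟨?_, ?_, by simp, by simp [deriv_pow8], by simp, by simp, ?_⟩
  · intro τ hτ
    rw [deriv_pow8]
    have hd : deriv (fun τ : ℝ => 8 * τ ^ 7) τ = 56 * τ ^ 6 := by
      simp [deriv_pow]; ring
    beta_reduce
    rw [hd, rpow_pow8 τ hτ.1 8 6 (3/4) (by norm_num),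
      rpow_pow8 τ hτ.1 8 7 (7/8) (by norm_num)]
    ring
  · intro τ _
    simp [Real.zero_rpow (by norm_num : (3:ℝ)/4 ≠ 0),
      Real.zero_rpow (by norm_num : (7:ℝ)/8 ≠ 0)]
  · intro h
    have := congrFun h 1
    simp at this
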